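/- Identification of the interventional mean: if Y_{a,m} ⊥ A | W, M_a ⊥ A | W, and Y_{a,m} ⊥ M | (A,W,Z), and positivity holds, then E[Y_{a', G_{a*}}] = Σ_{w,z,m} E[Y | A=a', Z=z, M=m, W=w] · P(Z=z | A=a', W=w) · P(M=m | A=a*, W=w) · P(W=w), where G_{a*} is a draw from the conditional distribution of M_{a*} given W. -/
import Mathlib


open Finset
open scoped Classical

/-- Probability of the event `S` under the pmf `P` on a finite outcome space. -/
noncomputable def pr {Ω : Type*} [Fintype Ω] (P : Ω → ℝ) (S : Ω → Prop) : ℝ :=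
  ∑ ω, if S ω then P ω else 0

/-- Conditional probability `P(S | T)`. -/
noncomputable def cpr {Ω : Type*} [Fintype Ω] (P : Ω → ℝ) (S T : Ω → Prop) : ℝ :=
  pr P (fun ω => S ω ∧ T ω) / pr P T

/-- Conditional expectation `E[f | T]` (pmf-weighted average). -/
noncomputable def cex {Ω : Type*} [Fintype Ω] (P : Ω → ℝ) (f : Ω → ℝ)
    (T : Ω → Prop) : ℝ :=
  (∑ ω, if T ω then P ω * f ω else 0) / pr P T

section Helpers
variable {Ω : Type*} [Fintype Ω]

lemma pr_congr (P : Ω → ℝ) {S T : Ω → Prop} (h : ∀ ω, S ω ↔ T ω) :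
    pr P S = pr P T := by
  unfold pr
  exact Finset.sum_congr rfl fun ω _ => by rw [if_congr (h ω) rfl rfl]

lemma pr_mono (P : Ω → ℝ) (hP : ∀ ω, 0 ≤ P ω) {S T : Ω → Prop}
    (h : ∀ ω, S ω → T ω) : pr P S ≤ pr P T := by
  unfold pr
  apply Finset.sum_le_sum
  intro ω _
  by_cases hs : S ω
  · simp [hs, h ω hs]
  · by_cases ht : T ω <;> simp [hs, ht, hP ω]

noncomputable def nm (P : Ω → ℝ) (f : Ω → ℝ) (S : Ω → Prop) : ℝ :=
  ∑ ω, if S ω then P ω * f ω else 0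

lemma nm_congr (P : Ω → ℝ) {f g : Ω → ℝ} {S T : Ω → Prop}
    (h : ∀ ω, S ω ↔ T ω) (hf : ∀ ω, T ω → f ω = g ω) :
    nm P f S = nm P g T := by
  unfold nm
  refine Finset.sum_congr rfl fun ω _ => ?_
  by_cases ht : T ω
  · rw [if_pos ((h ω).mpr ht), if_pos ht, hf ω ht]
  · rw [if_neg (fun hs => ht ((h ω).mp hs)), if_neg ht]

lemma nm_eq_sum (P : Ω → ℝ) (f : Ω → ℝ) (S : Ω → Prop) :
    nm P f S = ∑ y ∈ Finset.univ.image f, y * pr P (fun ω => f ω = y ∧ S ω) := by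
  unfold nm
  have h1 : ∀ ω : Ω, (if S ω then P ω * f ω else 0)
      = ∑ y ∈ Finset.univ.image f, (if f ω = y ∧ S ω then y * P ω else 0) := by
    intro ω
    by_cases hs : S ω
    · simp only [hs, and_true]
      rw [Finset.sum_ite_eq]
      simp [Finset.mem_image, mul_comm]
    · simp [hs]
  calc (∑ ω, if S ω then P ω * f ω else 0)
      = ∑ ω, ∑ y ∈ Finset.univ.image f, (if f ω = y ∧ S ω then y * P ω else 0) :=
        Finset.sum_congr rfl fun ω _ => h1 ω
    _ = ∑ y ∈ Finset.univ.image f, ∑ ω, (if f ω = y ∧ S ω then y * P ω else 0) :=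
        Finset.sum_comm
    _ = ∑ y ∈ Finset.univ.image f, y * ∑ ω, (if f ω = y ∧ S ω then P ω else 0) := by
        refine Finset.sum_congr rfl fun y _ => ?_
        rw [Finset.mul_sum]
        refine Finset.sum_congr rfl fun ω _ => ?_
        by_cases h : f ω = y ∧ S ω <;> simp [h]
    _ = ∑ y ∈ Finset.univ.image f, y * pr P (fun ω => f ω = y ∧ S ω) := by
          refine Finset.sum_congr rfl fun y _ => ?_
          congr 1
          exact Finset.sum_congr rfl fun ω _ => by
            by_cases h : f ω = y ∧ S ω <;> simp [h]

lemma nm_transfer (P : Ω → ℝ) (f : Ω → ℝ) (S T : Ω → Prop)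
    (h : ∀ y : ℝ, pr P (fun ω => f ω = y ∧ S ω) * pr P T
        = pr P (fun ω => f ω = y ∧ T ω) * pr P S) :
    nm P f S * pr P T = nm P f T * pr P S := by
  rw [nm_eq_sum, nm_eq_sum, Finset.sum_mul, Finset.sum_mul]
  refine Finset.sum_congr rfl fun y _ => ?_
  rw [mul_assoc, h y, mul_assoc]

lemma nm_fiber {𝒵 : Type*} [Fintype 𝒵] (P : Ω → ℝ) (f : Ω → ℝ) (S : Ω → Prop) (Z : Ω → 𝒵) :
    nm P f S = ∑ z, nm P f (fun ω => S ω ∧ Z ω = z) := by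
  unfold nm
  rw [Finset.sum_comm]
  refine Finset.sum_congr rfl fun ω _ => ?_
  by_cases hs : S ω <;> simp [hs]

end Helpers

section SCM

variable {Ω 𝒲 𝒜 𝒵 ℳ 𝒰Z 𝒰M 𝒰Y : Type*} [Fintype Ω] [Fintype 𝒲] [Fintype 𝒵]
  [Fintype ℳ]
variable (W : Ω → 𝒲) (UZ : Ω → 𝒰Z) (UM : Ω → 𝒰M) (UY : Ω → 𝒰Y)
variable (fZ : 𝒲 → 𝒜 → 𝒰Z → 𝒵) (fM : 𝒲 → 𝒜 → 𝒵 → 𝒰M → ℳ)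
variable (fY : 𝒲 → 𝒜 → 𝒵 → ℳ → 𝒰Y → ℝ)

/-- Counterfactual intermediate confounder `Z_a = f_Z(W,a,U_Z)`. -/
def Za (a : 𝒜) (ω : Ω) : 𝒵 := fZ (W ω) a (UZ ω)

/-- Counterfactual mediator `M_a = f_M(W,a,Z_a,U_M)`. -/
def Ma (a : 𝒜) (ω : Ω) : ℳ := fM (W ω) a (Za W UZ fZ a ω) (UM ω)

/-- Counterfactual outcome `Y_{a,m} = f_Y(W,a,Z_a,m,U_Y)`. -/
def Yam (a : 𝒜) (m : ℳ) (ω : Ω) : ℝ := fY (W ω) a (Za W UZ fZ a ω) m (UY ω)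

/-- Identification of the interventional mean. Under the NPSEM with
counterfactuals defined by substitution, the assumptions
(i) `Y_{a,m} ⊥ A | W`, (ii) `M_a ⊥ A | W`, (iii) `Y_{a,m} ⊥ M | (A,W,Z)`, and
positivity, the interventional mean `E[Y_{a', G_{a*}}]` — where `G_{a*}` is a draw,
independently of all else given `W`, from the conditional law of `M_{a*}` given
`W`, so that `E[Y_{a', G_{a*}}] = Σ_{w,m} E[Y_{a',m}|W=w] P(M_{a*}=m|W=w) P(W=w)` —
equals `Σ_{w,z,m} E[Y|A=a',Z=z,M=m,W=w] P(Z=z|A=a',W=w) P(M=m|A=a*,W=w) P(W=w)`. -/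
theorem interventional_mean_identification
    (P : Ω → ℝ) (hP : ∀ ω, 0 ≤ P ω) (hsum : ∑ ω, P ω = 1)
    (A : Ω → 𝒜) (Z : Ω → 𝒵) (M : Ω → ℳ) (Y : Ω → ℝ)
    (hZ : ∀ ω, Z ω = fZ (W ω) (A ω) (UZ ω))
    (hM : ∀ ω, M ω = fM (W ω) (A ω) (Z ω) (UM ω))
    (hY : ∀ ω, Y ω = fY (W ω) (A ω) (Z ω) (M ω) (UY ω))
    (a' astar : 𝒜)
    (hpos : ∀ w a z m,
      0 < pr P (fun ω => W ω = w ∧ A ω = a ∧ Z ω = z ∧ M ω = m))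
    -- (i) Y_{a,m} ⊥ A | W
    (hYA : ∀ (a : 𝒜) (m : ℳ) (y : ℝ) (aa : 𝒜) (w : 𝒲),
      pr P (fun ω => Yam W UZ UY fZ fY a m ω = y ∧ A ω = aa ∧ W ω = w) *
          pr P (fun ω => W ω = w) =
        pr P (fun ω => Yam W UZ UY fZ fY a m ω = y ∧ W ω = w) *
          pr P (fun ω => A ω = aa ∧ W ω = w))
    -- (ii) M_a ⊥ A | W
    (hMA : ∀ (a : 𝒜) (m : ℳ) (aa : 𝒜) (w : 𝒲),
      pr P (fun ω => Ma W UZ UM fZ fM a ω = m ∧ A ω = aa ∧ W ω = w) *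
          pr P (fun ω => W ω = w) =
        pr P (fun ω => Ma W UZ UM fZ fM a ω = m ∧ W ω = w) *
          pr P (fun ω => A ω = aa ∧ W ω = w))
    -- (iii) Y_{a,m} ⊥ M | (A,W,Z)
    (hYM : ∀ (a : 𝒜) (m : ℳ) (y : ℝ) (m' : ℳ) (aa : 𝒜) (w : 𝒲) (z : 𝒵),
      pr P (fun ω => Yam W UZ UY fZ fY a m ω = y ∧ M ω = m' ∧
            A ω = aa ∧ W ω = w ∧ Z ω = z) *
          pr P (fun ω => A ω = aa ∧ W ω = w ∧ Z ω = z) =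
        pr P (fun ω => Yam W UZ UY fZ fY a m ω = y ∧
            A ω = aa ∧ W ω = w ∧ Z ω = z) *
          pr P (fun ω => M ω = m' ∧ A ω = aa ∧ W ω = w ∧ Z ω = z)) :
    (∑ w, ∑ m,
        cex P (Yam W UZ UY fZ fY a' m) (fun ω => W ω = w) *
          cpr P (fun ω => Ma W UZ UM fZ fM astar ω = m) (fun ω => W ω = w) *
          pr P (fun ω => W ω = w)) =
      ∑ w, ∑ z, ∑ m,
        cex P Y (fun ω => A ω = a' ∧ Z ω = z ∧ M ω = m ∧ W ω = w) *
          cpr P (fun ω => Z ω = z) (fun ω => A ω = a' ∧ W ω = w) *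
          cpr P (fun ω => M ω = m) (fun ω => A ω = astar ∧ W ω = w) *
          pr P (fun ω => W ω = w) := by

  classical
  -- Ω is nonempty
  have hne : Nonempty Ω := by
    by_contra h
    rw [not_nonempty_iff] at h
    rw [Finset.univ_eq_empty, Finset.sum_empty] at hsum
    exact one_ne_zero hsum.symm
  obtain ⟨ω₀⟩ := hne
  set z₀ : 𝒵 := Z ω₀ with hz₀
  set m₀ : ℳ := M ω₀ with hm₀
  -- positivity of coarser events
  have hprW : ∀ w, 0 < pr P (fun ω => W ω = w) := fun w =>
    lt_of_lt_of_le (hpos w a' z₀ m₀) (pr_mono P hP fun ω h => h.1)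
  have hprAW : ∀ a w, 0 < pr P (fun ω => A ω = a ∧ W ω = w) := fun a w =>
    lt_of_lt_of_le (hpos w a z₀ m₀) (pr_mono P hP fun ω h => ⟨h.2.1, h.1⟩)
  have hprAWZ : ∀ w z, 0 < pr P (fun ω => A ω = a' ∧ W ω = w ∧ Z ω = z) := fun w z =>
    lt_of_lt_of_le (hpos w a' z m₀) (pr_mono P hP fun ω h => ⟨h.2.1, h.1, h.2.2.1⟩)
  have hprMAWZ : ∀ w z m, 0 < pr P
      (fun ω => M ω = m ∧ A ω = a' ∧ W ω = w ∧ Z ω = z) := fun w z m =>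
    lt_of_lt_of_le (hpos w a' z m)
      (pr_mono P hP fun ω h => ⟨h.2.2.2, h.2.1, h.1, h.2.2.1⟩)
  -- consistency
  have hMaM : ∀ ω, A ω = astar → Ma W UZ UM fZ fM astar ω = M ω := fun ω ha => by
    simp [Ma, Za, hM ω, hZ ω, ha]
  have hYamY : ∀ (m : ℳ) ω, A ω = a' → M ω = m →
      Yam W UZ UY fZ fY a' m ω = Y ω := fun m ω ha hm => by
    simp [Yam, Za, hY ω, hZ ω, ha, hm]
  -- Step B : P(M_{a*}=m | W=w) = P(M=m | A=a*, W=w)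
  have stepB : ∀ (w : 𝒲) (m : ℳ),
      cpr P (fun ω => Ma W UZ UM fZ fM astar ω = m) (fun ω => W ω = w)
        = cpr P (fun ω => M ω = m) (fun ω => A ω = astar ∧ W ω = w) := by
    intro w m
    have h1 : pr P (fun ω => Ma W UZ UM fZ fM astar ω = m ∧ A ω = astar ∧ W ω = w)
        = pr P (fun ω => M ω = m ∧ A ω = astar ∧ W ω = w) := by
      refine pr_congr P fun ω => ?_
      constructor
      · rintro ⟨h1, h2, h3⟩; exact ⟨(hMaM ω h2) ▸ h1, h2, h3⟩
      · rintro ⟨h1, h2, h3⟩; exact ⟨(hMaM ω h2).trans h1, h2, h3⟩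
    have h2 := hMA astar m astar w
    rw [h1] at h2
    unfold cpr
    rw [div_eq_div_iff (hprW w).ne' (hprAW astar w).ne']
    have h3 : pr P (fun ω => Ma W UZ UM fZ fM astar ω = m ∧ W ω = w)
        = pr P (fun ω => (fun ω => Ma W UZ UM fZ fM astar ω = m) ω ∧
            (fun ω => W ω = w) ω) := rfl
    have h4 : pr P (fun ω => M ω = m ∧ A ω = astar ∧ W ω = w)
        = pr P (fun ω => (fun ω => M ω = m) ω ∧
            (fun ω => A ω = astar ∧ W ω = w) ω) := rfl
    rw [← h3, ← h4]
    linarith [h2]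
  -- Step A : E[Y_{a',m} | W=w] = Σ_z E[Y | A=a',Z=z,M=m,W=w] P(Z=z | A=a',W=w)
  have stepA : ∀ (w : 𝒲) (m : ℳ),
      cex P (Yam W UZ UY fZ fY a' m) (fun ω => W ω = w)
        = ∑ z, cex P Y (fun ω => A ω = a' ∧ Z ω = z ∧ M ω = m ∧ W ω = w) *
            cpr P (fun ω => Z ω = z) (fun ω => A ω = a' ∧ W ω = w) := by
    intro w m
    set g : Ω → ℝ := Yam W UZ UY fZ fY a' m with hg
    -- s1 : condition on A = a' as well
    have s1 : cex P g (fun ω => W ω = w)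
        = cex P g (fun ω => A ω = a' ∧ W ω = w) := by
      have ht := nm_transfer P g (fun ω => A ω = a' ∧ W ω = w) (fun ω => W ω = w)
        (fun y => hYA a' m y a' w)
      show nm P g (fun ω => W ω = w) / pr P (fun ω => W ω = w)
          = nm P g (fun ω => A ω = a' ∧ W ω = w) / pr P (fun ω => A ω = a' ∧ W ω = w)
      rw [div_eq_div_iff (hprW w).ne' (hprAW a' w).ne']
      linarith [ht]
    -- s3+s4 : per z, condition on M = m and use consistency
    have s34 : ∀ z : 𝒵,
        nm P g (fun ω => A ω = a' ∧ W ω = w ∧ Z ω = z) /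
            pr P (fun ω => A ω = a' ∧ W ω = w ∧ Z ω = z)
          = cex P Y (fun ω => A ω = a' ∧ Z ω = z ∧ M ω = m ∧ W ω = w) := by
      intro z
      have ht := nm_transfer P g
        (fun ω => M ω = m ∧ A ω = a' ∧ W ω = w ∧ Z ω = z)
        (fun ω => A ω = a' ∧ W ω = w ∧ Z ω = z)
        (fun y => hYM a' m y m a' w z)
      have hnm : nm P g (fun ω => M ω = m ∧ A ω = a' ∧ W ω = w ∧ Z ω = z)
          = nm P Y (fun ω => A ω = a' ∧ Z ω = z ∧ M ω = m ∧ W ω = w) := by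
        refine nm_congr P (fun ω => ?_) (fun ω h => hYamY m ω h.1 h.2.2.1)
        constructor
        · rintro ⟨h1, h2, h3, h4⟩; exact ⟨h2, h4, h1, h3⟩
        · rintro ⟨h1, h2, h3, h4⟩; exact ⟨h3, h1, h4, h2⟩
      have hpr : pr P (fun ω => M ω = m ∧ A ω = a' ∧ W ω = w ∧ Z ω = z)
          = pr P (fun ω => A ω = a' ∧ Z ω = z ∧ M ω = m ∧ W ω = w) := by
        refine pr_congr P fun ω => ?_
        constructor
        · rintro ⟨h1, h2, h3, h4⟩; exact ⟨h2, h4, h1, h3⟩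
        · rintro ⟨h1, h2, h3, h4⟩; exact ⟨h3, h1, h4, h2⟩
      rw [hnm, hpr] at ht
      show _ = nm P Y (fun ω => A ω = a' ∧ Z ω = z ∧ M ω = m ∧ W ω = w) /
          pr P (fun ω => A ω = a' ∧ Z ω = z ∧ M ω = m ∧ W ω = w)
      have hp2 : 0 < pr P (fun ω => A ω = a' ∧ Z ω = z ∧ M ω = m ∧ W ω = w) := by
        rw [← hpr]; exact hprMAWZ w z m
      rw [div_eq_div_iff (hprAWZ w z).ne' hp2.ne']
      linarith [ht]
    -- s2 : law of total expectation over Z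
    have s2 : cex P g (fun ω => A ω = a' ∧ W ω = w)
        = ∑ z, (nm P g (fun ω => A ω = a' ∧ W ω = w ∧ Z ω = z) /
            pr P (fun ω => A ω = a' ∧ W ω = w)) := by
      show nm P g (fun ω => A ω = a' ∧ W ω = w) / pr P (fun ω => A ω = a' ∧ W ω = w) = _
      rw [nm_fiber P g (fun ω => A ω = a' ∧ W ω = w) Z, Finset.sum_div]
      refine Finset.sum_congr rfl fun z _ => ?_
      congr 1
      exact nm_congr P (fun ω => by tauto) (fun ω _ => rfl)
    rw [hg] at s1 ⊢
    rw [s1, s2]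
    refine Finset.sum_congr rfl fun z _ => ?_
    rw [← s34 z]
    have hcpr : cpr P (fun ω => Z ω = z) (fun ω => A ω = a' ∧ W ω = w)
        = pr P (fun ω => A ω = a' ∧ W ω = w ∧ Z ω = z) /
            pr P (fun ω => A ω = a' ∧ W ω = w) := by
      unfold cpr
      congr 1
      exact pr_congr P fun ω => by tauto
    rw [hcpr]
    rw [div_mul_div_comm, mul_comm (pr P (fun ω => A ω = a' ∧ W ω = w ∧ Z ω = z))]
    rw [mul_div_mul_right _ _ (hprAWZ w z).ne']
  -- assemble
  refine Finset.sum_congr rfl fun w _ => ?_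
  calc (∑ m, cex P (Yam W UZ UY fZ fY a' m) (fun ω => W ω = w) *
          cpr P (fun ω => Ma W UZ UM fZ fM astar ω = m) (fun ω => W ω = w) *
          pr P (fun ω => W ω = w))
      = ∑ m, ∑ z, cex P Y (fun ω => A ω = a' ∧ Z ω = z ∧ M ω = m ∧ W ω = w) *
          cpr P (fun ω => Z ω = z) (fun ω => A ω = a' ∧ W ω = w) *
          cpr P (fun ω => M ω = m) (fun ω => A ω = astar ∧ W ω = w) *
          pr P (fun ω => W ω = w) := by
        refine Finset.sum_congr rfl fun m _ => ?_
        rw [stepA w m, stepB w m, Finset.sum_mul, Finset.sum_mul]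
    _ = _ := by
        rw [Finset.sum_comm]


end SCM
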